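/- arXiv:1909.03282 — 4 statements merged into one kernel-verified Lean document; each statement's English description precedes it below -/
import Mathlib

section
/- The piecewise function f : ℝ → ℝ defined by f(x) = 0 for x ≤ 0, f(x) = 1 − √(1 − x²) for 0 ≤ x < √2/2, f(x) = √(1 − (x − √2)²) − √2 + 1 for √2/2 ≤ x < 1, and f(x) = ½(x − 1 + √((√2 − 1)/2))² + √(2√2 − 2) + (5 − 5√2)/4 for x ≥ 1, is not convex on ℝ. -/
/-!
On `(√2/2, 1)` the function is a constant plus the upper arc `√(1 - (x - √2)²)` of a circle,
which is strictly concave as the square root of a strictly concave nonnegative function. A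
function cannot be both convex and strictly concave on a set with two distinct points.
-/

open Set Real

theorem ConvexOn.subsingleton_of_strictConcaveOn {𝕜 E β : Type*} [Field 𝕜] [LinearOrder 𝕜]
    [IsStrictOrderedRing 𝕜] [AddCommMonoid E] [Module 𝕜 E] [AddCommMonoid β] [PartialOrder β]
    [SMul 𝕜 β] {s : Set E} {f : E → β} (hf : ConvexOn 𝕜 s f) (hf' : StrictConcaveOn 𝕜 s f) :
    s.Subsingleton := by
  intro x hx y hy
  by_contra hxy
  have h2 : (0 : 𝕜) < 1 / 2 := one_half_pos
  exact (hf'.2 hx hy hxy h2 h2 (add_halves 1)).not_ge (hf.2 hx hy h2.le h2.le (add_halves 1))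

theorem strictConcaveOn_one_sub_sq_sub (c : ℝ) :
    StrictConcaveOn ℝ univ fun x : ℝ => 1 - (x - c) ^ 2 := by
  refine ⟨convex_univ, fun x _ y _ hxy a b ha hb hab => ?_⟩
  have hxy' : 0 < (x - y) ^ 2 := by positivity [sub_ne_zero.2 hxy]
  simp only [smul_eq_mul]
  have hb' : b = 1 - a := by linarith
  subst hb'
  nlinarith [mul_pos (mul_pos ha hb) hxy']

theorem StrictConcaveOn.sqrt {E : Type*} [AddCommMonoid E] [Module ℝ E] {s : Set E} {f : E → ℝ}
    (hf : StrictConcaveOn ℝ s f) (hf₀ : ∀ x ∈ s, 0 ≤ f x) :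
    StrictConcaveOn ℝ s fun x => √(f x) := by
  refine ⟨hf.1, fun x hx y hy hxy a b ha hb hab => ?_⟩
  calc a • √(f x) + b • √(f y) ≤ √(a • f x + b • f y) :=
        strictConcaveOn_sqrt.concaveOn.2 (hf₀ x hx) (hf₀ y hy) ha.le hb.le hab
    _ < √(f (a • x + b • y)) := by
        refine Real.sqrt_lt_sqrt ?_ (hf.2 hx hy hxy ha hb hab)
        simp only [smul_eq_mul]
        have hfx := hf₀ x hx
        have hfy := hf₀ y hy
        positivity

theorem strictConcaveOn_sqrt_one_sub_sq_sub (c : ℝ) :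
    StrictConcaveOn ℝ (Icc (c - 1) (c + 1)) fun x : ℝ => √(1 - (x - c) ^ 2) := by
  refine ((strictConcaveOn_one_sub_sq_sub c).subset (subset_univ _) (convex_Icc _ _)).sqrt ?_
  rintro x ⟨hx₁, hx₂⟩
  nlinarith

/-- The piecewise function from Example 2 of Zhang–Yin (which satisfies the restricted
secant inequality) is not convex on ℝ. -/
theorem stmt1 :
    ¬ ConvexOn ℝ Set.univ (fun x : ℝ =>
      if x ≤ 0 then 0
      else if x < Real.sqrt 2 / 2 then 1 - Real.sqrt (1 - x ^ 2)
      else if x < 1 then Real.sqrt (1 - (x - Real.sqrt 2) ^ 2) - Real.sqrt 2 + 1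
      else (1 / 2) * (x - 1 + Real.sqrt ((Real.sqrt 2 - 1) / 2)) ^ 2
            + Real.sqrt (2 * Real.sqrt 2 - 2) + (5 - 5 * Real.sqrt 2) / 4) := by
  intro hconv
  have hsqrt₂ : 1 < √2 ∧ √2 < 2 := by
    constructor <;> nlinarith [Real.sq_sqrt (zero_le_two : (0 : ℝ) ≤ 2), Real.sqrt_nonneg 2]
  have harc : StrictConcaveOn ℝ (Ioo (√2 / 2) 1)
      ((fun x => √(1 - (x - √2) ^ 2)) + fun _ => 1 - √2) := by
    refine ((strictConcaveOn_sqrt_one_sub_sq_sub √2).subset ?_ (convex_Ioo _ _)).add_const _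
    exact Ioo_subset_Icc_self.trans (Icc_subset_Icc (by linarith) (by linarith))
  refine (Ioo_infinite (by linarith : √2 / 2 < 1)).nontrivial.not_subsingleton ?_
  refine ((hconv.subset (subset_univ _) (convex_Ioo _ _)).congr ?_).subsingleton_of_strictConcaveOn
    harc
  rintro x ⟨hx₁, hx₂⟩
  simp only [Pi.add_apply]
  rw [if_neg (by linarith), if_neg hx₁.not_gt, if_pos hx₂]
  ring
end

section
/- Suppose each f_i : ℝ^p → ℝ (i = 1,…,n) is differentiable with L_f-Lipschitz gradient, the global cost f = Σᵢ fᵢ satisfies the restricted secant inequality with constant ν > 0 with respect to its nonempty closed convex minimizer set X*, and L is the Laplacian of a connected graph. Define 𝒇̃(𝒙) = Σᵢ fᵢ(xᵢ) on ℝ^{np}, 𝑳 = L ⊗ I_p, and 𝑿* = {𝟏ₙ ⊗ x* : x* ∈ X*}. If α > (2nL_f² + νL_f)/(ν ρ₂(L)), then for all 𝒙 ∈ ℝ^{np}: (∇𝒇̃(𝒙) − ∇𝒇̃(P_{𝑿*}(𝒙)))ᵀ(𝒙 − P_{𝑿*}(𝒙)) + α 𝒙ᵀ𝑳𝒙 ≥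 ν₁ ‖𝒙 − P_{𝑿*}(𝒙)‖², where ν₁ = min{ν/(2n), α ρ₂(L) − (2nL_f² + νL_f)/ν} > 0. -/
/-!
Let `x̄` be the mean of the agents' states and `q` the projection of `x̄` onto `X*`. The split
`‖𝒙 - 𝟏 ⊗ y‖² = Σᵢ ‖xᵢ - x̄‖² + n ‖x̄ - y‖²` and uniqueness of nearest points in convex sets show
that `P 𝒙 = 𝟏 ⊗ q`. The gradient term is then at least the restricted secant inequality at `x̄`
minus Lipschitz perturbations of size `‖xᵢ - x̄‖`, whose cross terms Young's inequality absorbs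
into half of `ν ‖x̄ - q‖²`. The Laplacian term pays for the remaining disagreement
`Σᵢ ‖xᵢ - x̄‖²`: after centring, every component along an eigenvector of eigenvalue `0` (a constant
vector) vanishes, so the spectral decomposition gives at least `ρ₂ Σᵢ ‖xᵢ - x̄‖²`.
-/

open scoped RealInnerProductSpace
open Finset

variable {ι : Type*} [Fintype ι]
variable {E : Type*} [NormedAddCommGroup E] [InnerProductSpace ℝ E]

theorem sum_sum_mul_inner_eq_sum_mul_norm_sq {κ : Type*} [Fintype κ] (a : κ → ℝ)
    (u : κ → ι → ℝ) (x : ι → E) :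
    ∑ i, ∑ j, (∑ k, a k * u k i * u k j) * ⟪x i, x j⟫ =
      ∑ k, a k * ‖∑ i, u k i • x i‖ ^ 2 := by
  simp only [← real_inner_self_eq_norm_sq, sum_inner, inner_sum, real_inner_smul_left,
    real_inner_smul_right, sum_mul, mul_sum]
  refine (sum_congr rfl fun i _ => sum_comm).trans ?_
  refine sum_comm.trans (sum_congr rfl fun k _ => ?_)
  rw [sum_comm]
  exact sum_congr rfl fun j _ => sum_congr rfl fun i _ => by ring

theorem sum_sum_mul_inner_sub_const {L : Matrix ι ι ℝ} (hrow : ∀ i, ∑ j, L i j = 0)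
    (hcol : ∀ j, ∑ i, L i j = 0) (x : ι → E) (m : E) :
    ∑ i, ∑ j, L i j * ⟪x i - m, x j - m⟫ = ∑ i, ∑ j, L i j * ⟪x i, x j⟫ := by
  have hexpand : ∀ i j, L i j * ⟪x i - m, x j - m⟫ =
      L i j * ⟪x i, x j⟫ - L i j * ⟪x i, m⟫ - L i j * ⟪m, x j - m⟫ := fun i j => by
    simp only [inner_sub_left, inner_sub_right]; ring
  simp only [hexpand, sum_sub_distrib, ← sum_mul, hrow, zero_mul, sub_zero]
  rw [sum_comm (f := fun i j => L i j * ⟪m, x j - m⟫)]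
  simp only [← sum_mul, hcol, zero_mul, sum_const_zero, sub_zero]

noncomputable def mean (x : ι → E) : E := (Fintype.card ι : ℝ)⁻¹ • ∑ i, x i

theorem sum_sub_mean [Nonempty ι] (x : ι → E) : ∑ i, (x i - mean x) = 0 := by
  rw [sum_sub_distrib, sum_const, card_univ, ← Nat.cast_smul_eq_nsmul ℝ, mean, smul_smul,
    mul_inv_cancel₀ (by exact_mod_cast Fintype.card_ne_zero), one_smul, sub_self]

theorem sum_norm_sub_sq_eq [Nonempty ι] (x : ι → E) (y : E) :
    ∑ i, ‖x i - y‖ ^ 2 =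
      ∑ i, ‖x i - mean x‖ ^ 2 + Fintype.card ι * ‖mean x - y‖ ^ 2 := by
  have hsplit : ∀ i, ‖x i - y‖ ^ 2 = ‖x i - mean x‖ ^ 2 +
      2 * ⟪x i - mean x, mean x - y⟫ + ‖mean x - y‖ ^ 2 := fun i => by
    rw [← norm_add_sq_real, sub_add_sub_cancel]
  simp only [hsplit, sum_add_distrib, ← mul_sum, ← sum_inner, sum_sub_mean, inner_zero_left,
    mul_zero, add_zero, sum_const, card_univ, nsmul_eq_mul]

section Spectral

variable [DecidableEq ι]

theorem OrthonormalBasis.sum_apply_mul_apply (b : OrthonormalBasis ι ℝ (EuclideanSpace ℝ ι))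
    (i j : ι) : ∑ k, b k i * b k j = if i = j then 1 else 0 := by
  have h := congrArg (fun w : EuclideanSpace ℝ ι => w i) (b.sum_repr' (EuclideanSpace.single j 1))
  simp only [EuclideanSpace.inner_single_right, conj_trivial, one_mul, WithLp.ofLp_sum,
    WithLp.ofLp_smul, Finset.sum_apply, Pi.smul_apply, smul_eq_mul, PiLp.ofLp_single,
    Pi.single_apply] at h
  rw [← h]
  exact sum_congr rfl fun k _ => mul_comm _ _

theorem OrthonormalBasis.sum_norm_sq_eq (b : OrthonormalBasis ι ℝ (EuclideanSpace ℝ ι))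
    (x : ι → E) : ∑ i, ‖x i‖ ^ 2 = ∑ k, ‖∑ i, b k i • x i‖ ^ 2 := by
  have h := sum_sum_mul_inner_eq_sum_mul_norm_sq 1 (fun k i => b k i) x
  simp only [Pi.one_apply, one_mul, b.sum_apply_mul_apply, ite_mul, zero_mul, sum_ite_eq,
    mem_univ, if_true, real_inner_self_eq_norm_sq] at h
  exact h

namespace Matrix.IsHermitian

variable {L : Matrix ι ι ℝ} (hL : L.IsHermitian)

theorem apply_eq_sum_eigenvalues_mul (i j : ι) :
    L i j = ∑ k, hL.eigenvalues k * hL.eigenvectorBasis k i * hL.eigenvectorBasis k j := by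
  have h := congrArg (fun w : EuclideanSpace ℝ ι => (L.mulVec w) i)
    (hL.eigenvectorBasis.sum_repr' (EuclideanSpace.single j 1))
  simp only [EuclideanSpace.inner_single_right, WithLp.ofLp_sum, WithLp.ofLp_smul,
    Matrix.mulVec_sum, Matrix.mulVec_smul, hL.mulVec_eigenvectorBasis, Finset.sum_apply,
    Pi.smul_apply, smul_eq_mul, conj_trivial, one_mul, PiLp.ofLp_single,
    Matrix.mulVec_single_one, Matrix.col_apply] at h
  rw [← h]
  exact sum_congr rfl fun k _ => by ring

theorem sum_sum_mul_inner_eq (x : ι → E) :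
    ∑ i, ∑ j, L i j * ⟪x i, x j⟫ =
      ∑ k, hL.eigenvalues k * ‖∑ i, hL.eigenvectorBasis k i • x i‖ ^ 2 := by
  simp_rw [hL.apply_eq_sum_eigenvalues_mul]
  exact sum_sum_mul_inner_eq_sum_mul_norm_sq _ (fun k i => hL.eigenvectorBasis k i) x

theorem mul_sum_norm_sq_le_sum_sum_mul_inner
    (hker : ∀ v : ι → ℝ, L *ᵥ v = 0 → ∃ c : ℝ, v = fun _ => c) {ρ : ℝ}
    (hρ : ∀ k, hL.eigenvalues k = 0 ∨ ρ ≤ hL.eigenvalues k) {x : ι → E} (hx : ∑ i, x i = 0) :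
    ρ * ∑ i, ‖x i‖ ^ 2 ≤ ∑ i, ∑ j, L i j * ⟪x i, x j⟫ := by
  rw [hL.eigenvectorBasis.sum_norm_sq_eq, hL.sum_sum_mul_inner_eq, mul_sum]
  refine sum_le_sum fun k _ => ?_
  rcases hρ k with hzero | hle
  · obtain ⟨c, hc⟩ := hker _ (by rw [hL.mulVec_eigenvectorBasis, hzero, zero_smul])
    have hcomb : ∑ i, hL.eigenvectorBasis k i • x i = 0 := by
      simp only [hc, ← smul_sum, hx, smul_zero]
    simp [hcomb, hzero]
  · exact mul_le_mul_of_nonneg_right hle (sq_nonneg _)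

theorem mul_sum_norm_sub_mean_sq_le [Nonempty ι]
    (hker : ∀ v : ι → ℝ, L *ᵥ v = 0 ↔ ∃ c : ℝ, v = fun _ => c) {ρ : ℝ}
    (hρ : ∀ k, hL.eigenvalues k = 0 ∨ ρ ≤ hL.eigenvalues k) (x : ι → E) :
    ρ * ∑ i, ‖x i - mean x‖ ^ 2 ≤ ∑ i, ∑ j, L i j * ⟪x i, x j⟫ := by
  have hrow : ∀ i, ∑ j, L i j = 0 := fun i => by
    simpa [Matrix.mulVec, dotProduct] using congrFun ((hker _).2 ⟨1, rfl⟩) i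
  have hcol : ∀ j, ∑ i, L i j = 0 := fun j => by
    simpa [← hL.apply j] using hrow j
  rw [← sum_sum_mul_inner_sub_const hrow hcol x (mean x)]
  exact hL.mul_sum_norm_sq_le_sum_sum_mul_inner (fun v => (hker v).1) hρ (sum_sub_mean x)

end Matrix.IsHermitian

end Spectral

theorem Convex.eq_of_forall_norm_sub_le {K : Set E} (hK : Convex ℝ K) {u a b : E}
    (ha : a ∈ K) (hb : b ∈ K) (hamin : ∀ w ∈ K, ‖u - a‖ ≤ ‖u - w‖)
    (hbmin : ∀ w ∈ K, ‖u - b‖ ≤ ‖u - w‖) : a = b := by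
  have hmid : (1 / 2 : ℝ) • a + (1 / 2 : ℝ) • b ∈ K :=
    hK ha hb (by norm_num) (by norm_num) (by norm_num)
  have hab := hamin b hb
  have hba := hbmin a ha
  have hm := hamin _ hmid
  have hsum : (u - a) + (u - b) = (2 : ℝ) • (u - ((1 / 2 : ℝ) • a + (1 / 2 : ℝ) • b)) := by
    module
  have hpar := parallelogram_law_with_norm ℝ (u - a) (u - b)
  rw [hsum, norm_smul, Real.norm_two, sub_sub_sub_cancel_left] at hpar
  have : ‖b - a‖ ≤ 0 := by
    nlinarith [norm_nonneg (b - a), norm_nonneg (u - a)]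
  exact (sub_eq_zero.1 (norm_le_zero_iff.1 this)).symm

theorem PiLp.norm_sub_const_sq {V : Type*} [NormedAddCommGroup V] (z : PiLp 2 (fun _ : ι => V))
    (y : V) :
    ‖z - WithLp.toLp 2 (fun _ => y)‖ ^ 2 = ∑ i, ‖z i - y‖ ^ 2 := by
  simp [PiLp.norm_sq_eq_of_L2]

theorem norm_mean_sub_le_of_norm_sub_const_le [Nonempty ι] {K : Set E}
    {z : PiLp 2 (fun _ : ι => E)} {a : E}
    (ha : ∀ w ∈ K, ‖z - WithLp.toLp 2 (fun _ => a)‖ ≤ ‖z - WithLp.toLp 2 (fun _ => w)‖) :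
    ∀ w ∈ K, ‖mean z - a‖ ≤ ‖mean z - w‖ := by
  intro w hw
  have h := pow_le_pow_left₀ (norm_nonneg _) (ha w hw) 2
  rw [PiLp.norm_sub_const_sq, PiLp.norm_sub_const_sq, sum_norm_sub_sq_eq (fun i => z i) a,
    sum_norm_sub_sq_eq (fun i => z i) w] at h
  have hcard : (0 : ℝ) < Fintype.card ι := by exact_mod_cast Fintype.card_pos
  exact pow_le_pow_iff_left₀ (norm_nonneg _) (norm_nonneg _) two_ne_zero |>.1
    (le_of_mul_le_mul_left (by linarith) hcard)

theorem gradient_fun_sum {F : Type*} [NormedAddCommGroup F] [InnerProductSpace ℝ F]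
    [CompleteSpace F] {g : ι → F → ℝ} {x : F} (hg : ∀ i, DifferentiableAt ℝ (g i) x) :
    gradient (fun y => ∑ i, g i y) x = ∑ i, gradient (g i) x := by
  rw [gradient, fderiv_fun_sum fun i _ => hg i]
  exact map_sum (InnerProductSpace.toDual ℝ F).symm _ _

theorem inner_sub_ge_of_norm_sub_le_mul {G : E → E} {K : ℝ}
    (hG : ∀ a b, ‖G a - G b‖ ≤ K * ‖a - b‖) (x m q : E) {ε : ℝ} (hε : 0 < ε) :
    ⟪G m - G q, m - q⟫ - (K + K ^ 2 / ε) * ‖x - m‖ ^ 2 - ε * ‖m - q‖ ^ 2 ≤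
      ⟪G x - G q, x - q⟫ := by
  set d := ‖x - m‖
  set c := ‖m - q‖
  have hdecomp : ⟪G x - G q, x - q⟫ =
      ⟪G x - G m, x - q⟫ + ⟪G m - G q, x - m⟫ + ⟪G m - G q, m - q⟫ := by
    simp only [inner_sub_left, inner_sub_right]; ring
  have h1 : -(K * d * (d + c)) ≤ ⟪G x - G m, x - q⟫ := by
    refine neg_le_of_abs_le ((abs_real_inner_le_norm _ _).trans ?_)
    refine mul_le_mul (hG x m) ?_ (norm_nonneg _) ((norm_nonneg _).trans (hG x m))
    simpa only [sub_add_sub_cancel] using norm_add_le (x - m) (m - q)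
  have h2 : -(K * c * d) ≤ ⟪G m - G q, x - m⟫ :=
    neg_le_of_abs_le ((abs_real_inner_le_norm _ _).trans
      (mul_le_mul_of_nonneg_right (hG m q) (norm_nonneg _)))
  -- Young: `2 K c d ≤ ε c² + K² d² / ε`
  have hyoung : 2 * K * c * d ≤ ε * c ^ 2 + K ^ 2 / ε * d ^ 2 := by
    have := sq_nonneg (ε * c - K * d)
    rw [div_mul_eq_mul_div, ← sub_nonneg]
    field_simp
    nlinarith
  nlinarith

theorem sum_inner_sub_ge_of_norm_sub_le_mul {G : ι → E → E} {K : ℝ}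
    (hG : ∀ i a b, ‖G i a - G i b‖ ≤ K * ‖a - b‖) (x : ι → E) (m q : E) {ε : ℝ} (hε : 0 < ε) :
    ∑ i, ⟪G i m - G i q, m - q⟫ - (K + K ^ 2 / ε) * ∑ i, ‖x i - m‖ ^ 2
        - Fintype.card ι * ε * ‖m - q‖ ^ 2 ≤ ∑ i, ⟪G i (x i) - G i q, x i - q⟫ := by
  refine le_of_eq_of_le ?_
    (sum_le_sum fun i _ => inner_sub_ge_of_norm_sub_le_mul (hG i) (x i) m q hε)
  simp only [sum_sub_distrib, mul_sum, sum_const, card_univ, nsmul_eq_mul, mul_assoc]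

theorem min_mul_add_le {a b s t : ℝ} (hs : 0 ≤ s) (ht : 0 ≤ t) :
    min a b * (s + t) ≤ a * s + b * t := by
  rw [mul_add]
  exact add_le_add (mul_le_mul_of_nonneg_right (min_le_left a b) hs)
    (mul_le_mul_of_nonneg_right (min_le_right a b) ht)

theorem stmt8_general {n p : ℕ} (hn : 0 < n)
    (f : Fin n → (EuclideanSpace ℝ (Fin p) → ℝ))
    (hdiff : ∀ i, Differentiable ℝ (f i))
    (Lf : ℝ) (hLf : 0 < Lf)
    (hlip : ∀ i, ∀ a b : EuclideanSpace ℝ (Fin p),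
      ‖gradient (f i) a - gradient (f i) b‖ ≤ Lf * ‖a - b‖)
    (Xs : Set (EuclideanSpace ℝ (Fin p)))
    (hconv : Convex ℝ Xs)
    (Pp : EuclideanSpace ℝ (Fin p) → EuclideanSpace ℝ (Fin p))
    (hPpmem : ∀ x, Pp x ∈ Xs)
    (hPpmin : ∀ x, ∀ y ∈ Xs, ‖x - Pp x‖ ≤ ‖x - y‖)
    (ν : ℝ) (hν : 0 < ν)
    (hRSI : ∀ x : EuclideanSpace ℝ (Fin p), ν * ‖x - Pp x‖ ^ 2 ≤
      ⟪gradient (fun y => ∑ i, f i y) x - gradient (fun y => ∑ i, f i y) (Pp x), x - Pp x⟫)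
    (L : Matrix (Fin n) (Fin n) ℝ)
    (hL : L.IsHermitian)
    (hker : ∀ v : Fin n → ℝ, L.mulVec v = 0 ↔ ∃ c : ℝ, v = (fun _ => c))
    (rho2 : ℝ) (hrho2pos : 0 < rho2)
    (hrho2min : ∀ i, hL.eigenvalues i = 0 ∨ rho2 ≤ hL.eigenvalues i)
    (P : PiLp 2 (fun _ : Fin n => EuclideanSpace ℝ (Fin p)) →
      PiLp 2 (fun _ : Fin n => EuclideanSpace ℝ (Fin p)))
    (hPmem : ∀ z, P z ∈ {z : PiLp 2 (fun _ : Fin n => EuclideanSpace ℝ (Fin p)) |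
      ∃ xs ∈ Xs, z = WithLp.toLp 2 (fun _ => xs)})
    (hPmin : ∀ z, ∀ c ∈ {z : PiLp 2 (fun _ : Fin n => EuclideanSpace ℝ (Fin p)) |
      ∃ xs ∈ Xs, z = WithLp.toLp 2 (fun _ => xs)}, ‖z - P z‖ ≤ ‖z - c‖)
    (α : ℝ) (hα : (2 * n * Lf ^ 2 + ν * Lf) / (ν * rho2) < α) :
    ∀ x : PiLp 2 (fun _ : Fin n => EuclideanSpace ℝ (Fin p)),
      min (ν / (2 * n)) (α * rho2 - (2 * n * Lf ^ 2 + ν * Lf) / ν) * ‖x - P x‖ ^ 2 ≤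
        (∑ i, ⟪gradient (f i) (x i) - gradient (f i) (P x i), x i - P x i⟫)
          + α * ∑ i, ∑ j, L i j * ⟪x i, x j⟫ := by
  intro x
  have : Nonempty (Fin n) := ⟨⟨0, hn⟩⟩
  set m := mean fun i => x i
  set q := Pp m
  set A := ∑ i, ‖x i - m‖ ^ 2
  set c := ‖m - q‖
  obtain ⟨a, ha, hPx⟩ := hPmem x
  have haq : a = q := hconv.eq_of_forall_norm_sub_le ha (hPpmem m)
    (norm_mean_sub_le_of_norm_sub_const_le fun w hw => hPx ▸ hPmin x _ ⟨w, hw, rfl⟩)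
    (hPpmin m)
  have hPxi : ∀ i, P x i = q := fun i => by rw [hPx, haq]
  have hdist : ‖x - P x‖ ^ 2 = n * c ^ 2 + A := by
    rw [hPx, haq, PiLp.norm_sub_const_sq, sum_norm_sub_sq_eq, Fintype.card_fin, add_comm]
  have hRSIm : ν * c ^ 2 ≤ ∑ i, ⟪gradient (f i) m - gradient (f i) q, m - q⟫ := by
    simpa only [gradient_fun_sum fun i => (hdiff i).differentiableAt, ← sum_sub_distrib,
      sum_inner] using hRSI m
  have hgrad := sum_inner_sub_ge_of_norm_sub_le_mul (fun i => hlip i) (fun i => x i) m q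
    (ε := ν / (2 * n)) (by positivity)
  have hconst : Lf + Lf ^ 2 / (ν / (2 * n)) = (2 * n * Lf ^ 2 + ν * Lf) / ν := by
    field_simp; ring
  rw [Fintype.card_fin, hconst] at hgrad
  have hhalf : ν / (2 * n) * (n * c ^ 2) = ν / 2 * c ^ 2 := by field_simp
  have hlap := hL.mul_sum_norm_sub_mean_sq_le hker hrho2min fun i => x i
  have hα0 : 0 ≤ α := le_of_lt <| lt_of_le_of_lt (by positivity) hα
  simp only [hdist, hPxi]
  calc _ ≤ ν / (2 * n) * (n * c ^ 2) + (α * rho2 - (2 * n * Lf ^ 2 + ν * Lf) / ν) * A :=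
        min_mul_add_le (by positivity) (sum_nonneg fun i _ => sq_nonneg _)
    _ ≤ _ := by linarith [mul_le_mul_of_nonneg_left hlap hα0]

/-- Lemma 2 of the paper: if each `fᵢ` has `L_f`-Lipschitz gradient, the global cost
`f = Σᵢ fᵢ` satisfies the restricted secant inequality with constant `ν > 0` w.r.t. its
nonempty closed convex minimizer set `Xs`, `L` is a connected graph Laplacian with smallest
positive eigenvalue `ρ₂`, and `α > (2n L_f² + ν L_f)/(ν ρ₂)`, then
`(∇𝒇̃(𝒙) − ∇𝒇̃(P 𝒙))ᵀ(𝒙 − P 𝒙) + α 𝒙ᵀ𝑳𝒙 ≥ ν₁ ‖𝒙 − P 𝒙‖²` with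
`ν₁ = min{ν/(2n), α ρ₂ − (2n L_f² + ν L_f)/ν}`. -/
theorem stmt8 {n p : ℕ} (hn : 0 < n)
    (f : Fin n → (EuclideanSpace ℝ (Fin p) → ℝ))
    (hdiff : ∀ i, Differentiable ℝ (f i))
    (Lf : ℝ) (hLf : 0 < Lf)
    (hlip : ∀ i, ∀ a b : EuclideanSpace ℝ (Fin p),
      ‖gradient (f i) a - gradient (f i) b‖ ≤ Lf * ‖a - b‖)
    (Xs : Set (EuclideanSpace ℝ (Fin p)))
    (hXs : Xs = {x | ∀ y, (∑ i, f i x) ≤ ∑ i, f i y})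
    (hne : Xs.Nonempty) (hclosed : IsClosed Xs) (hconv : Convex ℝ Xs)
    (Pp : EuclideanSpace ℝ (Fin p) → EuclideanSpace ℝ (Fin p))
    (hPpmem : ∀ x, Pp x ∈ Xs)
    (hPpmin : ∀ x, ∀ y ∈ Xs, ‖x - Pp x‖ ≤ ‖x - y‖)
    (ν : ℝ) (hν : 0 < ν)
    (hRSI : ∀ x : EuclideanSpace ℝ (Fin p), ν * ‖x - Pp x‖ ^ 2 ≤
      ⟪gradient (fun y => ∑ i, f i y) x - gradient (fun y => ∑ i, f i y) (Pp x), x - Pp x⟫)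
    (L : Matrix (Fin n) (Fin n) ℝ)
    (hL : L.IsHermitian) (hpsd : L.PosSemidef)
    (hker : ∀ v : Fin n → ℝ, L.mulVec v = 0 ↔ ∃ c : ℝ, v = (fun _ => c))
    (rho2 : ℝ) (hrho2pos : 0 < rho2)
    (hrho2mem : ∃ i, hL.eigenvalues i = rho2)
    (hrho2min : ∀ i, hL.eigenvalues i = 0 ∨ rho2 ≤ hL.eigenvalues i)
    (P : PiLp 2 (fun _ : Fin n => EuclideanSpace ℝ (Fin p)) →
      PiLp 2 (fun _ : Fin n => EuclideanSpace ℝ (Fin p)))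
    (hPmem : ∀ z, P z ∈ {z : PiLp 2 (fun _ : Fin n => EuclideanSpace ℝ (Fin p)) |
      ∃ xs ∈ Xs, z = WithLp.toLp 2 (fun _ => xs)})
    (hPmin : ∀ z, ∀ c ∈ {z : PiLp 2 (fun _ : Fin n => EuclideanSpace ℝ (Fin p)) |
      ∃ xs ∈ Xs, z = WithLp.toLp 2 (fun _ => xs)}, ‖z - P z‖ ≤ ‖z - c‖)
    (α : ℝ) (hα : (2 * n * Lf ^ 2 + ν * Lf) / (ν * rho2) < α) :
    ∀ x : PiLp 2 (fun _ : Fin n => EuclideanSpace ℝ (Fin p)),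
      min (ν / (2 * n)) (α * rho2 - (2 * n * Lf ^ 2 + ν * Lf) / ν) * ‖x - P x‖ ^ 2 ≤
        (∑ i, ⟪gradient (f i) (x i) - gradient (f i) (P x i), x i - P x i⟫)
          + α * ∑ i, ∑ j, L i j * ⟪x i, x j⟫ :=
  stmt8_general hn f hdiff Lf hLf hlip Xs hconv Pp hPpmem hPpmin ν hν hRSI L hL hker rho2 hrho2pos
    hrho2min P hPmem hPmin α hα
end

section
/- Under the hypotheses of the augmented restricted secant inequality lemma, the inner decomposition estimate: if 𝒙 = 𝒂 + 𝒃 with 𝒂 = 𝟏ₙ ⊗ a the consensus component and 𝒃 orthogonal to the consensus subspace, 𝒙* = P_{𝑿*}(𝒙) = 𝟏ₙ ⊗ x*, and each ∇fᵢ is L_f-Lipschitz while f satisfies RSI with constant ν, then (∇𝒇̃(𝒙) − ∇𝒇̃(𝒙*))ᵀ(𝒙 − 𝒙*) ≥ (ν/(2n))‖𝒂 − 𝒙*‖² − (2nL_f²/ν + L_f)‖𝒃‖². -/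
open scoped RealInnerProductSpace

/-!
Split `xᵢ − x* = (xᵢ − a) + (a − x*)` in each summand. The four resulting inner products are the
secant term at `a`, bounded below by the restricted secant inequality, and three cross terms,
bounded below by Cauchy–Schwarz and the Lipschitz bound on the gradients. The mixed terms
`‖a − x*‖ ‖xᵢ − a‖` are absorbed by Young's inequality with weight `ν / (2n)`, which costs half of
the secant term.
-/

section LipschitzInner

variable {E : Type*} [NormedAddCommGroup E] [InnerProductSpace ℝ E]

lemma neg_mul_le_inner_sub_of_norm_sub_le {g : E → E} {L : ℝ}
    (hg : ∀ u v, ‖g u - g v‖ ≤ L * ‖u - v‖) (u v w : E) :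
    -(L * ‖u - v‖ * ‖w‖) ≤ ⟪g u - g v, w⟫ := by
  have hcs := neg_le_of_abs_le (abs_real_inner_le_norm (g u - g v) w)
  have hlip := mul_le_mul_of_nonneg_right (hg u v) (norm_nonneg w)
  linarith

lemma two_mul_mul_le_mul_sq_add_sq_div {ε : ℝ} (hε : 0 < ε) (L s t : ℝ) :
    2 * (L * s * t) ≤ ε * s ^ 2 + L ^ 2 / ε * t ^ 2 := by
  have hsq : 0 ≤ (ε * s - L * t) ^ 2 / ε := by positivity
  have hexp : (ε * s - L * t) ^ 2 / ε = ε * s ^ 2 + L ^ 2 / ε * t ^ 2 - 2 * (L * s * t) := by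
    field_simp
    ring
  linarith

lemma inner_sub_sub_ge_of_norm_sub_le {g : E → E} {L ε : ℝ}
    (hg : ∀ u v, ‖g u - g v‖ ≤ L * ‖u - v‖) (hε : 0 < ε) (y a z : E) :
    ⟪g a - g z, a - z⟫ - (L + L ^ 2 / ε) * ‖y - a‖ ^ 2 - ε * ‖a - z‖ ^ 2 ≤
      ⟪g y - g z, y - z⟫ := by
  have hsplit : ⟪g y - g z, y - z⟫ = ⟪g y - g a, y - a⟫ + ⟪g y - g a, a - z⟫ +
      ⟪g a - g z, y - a⟫ + ⟪g a - g z, a - z⟫ := by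
    rw [show y - z = (y - a) + (a - z) by abel, show g y - g z = (g y - g a) + (g a - g z) by abel]
    simp only [inner_add_left, inner_add_right]
    ring
  have h₁ := neg_mul_le_inner_sub_of_norm_sub_le hg y a (y - a)
  have h₂ := neg_mul_le_inner_sub_of_norm_sub_le hg y a (a - z)
  have h₃ := neg_mul_le_inner_sub_of_norm_sub_le hg a z (y - a)
  have hyoung := two_mul_mul_le_mul_sq_add_sq_div hε L ‖a - z‖ ‖y - a‖
  linarith

lemma sum_inner_sub_sub_ge_of_norm_sub_le {ι : Type*} [Fintype ι] {g : ι → E → E} {L ε : ℝ}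
    (hg : ∀ i u v, ‖g i u - g i v‖ ≤ L * ‖u - v‖) (hε : 0 < ε) (y : ι → E) (a z : E) :
    ∑ i, ⟪g i a - g i z, a - z⟫ - (L + L ^ 2 / ε) * ∑ i, ‖y i - a‖ ^ 2 -
        ε * (Fintype.card ι * ‖a - z‖ ^ 2) ≤
      ∑ i, ⟪g i (y i) - g i z, y i - z⟫ := by
  have hsum := Finset.sum_le_sum fun i (_ : i ∈ Finset.univ) =>
    inner_sub_sub_ge_of_norm_sub_le (hg i) hε (y i) a z
  simpa only [Finset.sum_sub_distrib, ← Finset.mul_sum, Finset.sum_const, Finset.card_univ,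
    nsmul_eq_mul] using hsum

end LipschitzInner

lemma PiLp.norm_sq_toLp_const_sub {ι E : Type*} [Fintype ι] [SeminormedAddCommGroup E]
    (u v : E) :
    ‖WithLp.toLp 2 (fun _ : ι => u) - WithLp.toLp 2 (fun _ : ι => v)‖ ^ 2 =
      Fintype.card ι * ‖u - v‖ ^ 2 := by
  simp [PiLp.norm_sq_eq_of_L2]

lemma PiLp.norm_sq_sub_toLp_const {ι E : Type*} [Fintype ι] [SeminormedAddCommGroup E]
    (x : PiLp 2 fun _ : ι => E) (a : E) :
    ‖x - WithLp.toLp 2 (fun _ : ι => a)‖ ^ 2 = ∑ i, ‖x i - a‖ ^ 2 := by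
  simp [PiLp.norm_sq_eq_of_L2]

theorem stmt9_general {n p : ℕ} (hn : 0 < n)
    (f : Fin n → (EuclideanSpace ℝ (Fin p) → ℝ))
    (Lf ν : ℝ) (hν : 0 < ν)
    (hlip : ∀ i, ∀ u v : EuclideanSpace ℝ (Fin p),
      ‖gradient (f i) u - gradient (f i) v‖ ≤ Lf * ‖u - v‖)
    (x : PiLp 2 (fun _ : Fin n => EuclideanSpace ℝ (Fin p)))
    (a xstar : EuclideanSpace ℝ (Fin p))
    (A Xstar b : PiLp 2 (fun _ : Fin n => EuclideanSpace ℝ (Fin p)))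
    (hA : A = WithLp.toLp 2 (fun _ => a)) (hXstar : Xstar = WithLp.toLp 2 (fun _ => xstar))
    (hb : b = x - A)
    (hRSIa : ν * ‖a - xstar‖ ^ 2 ≤
      ∑ i, ⟪gradient (f i) a - gradient (f i) xstar, a - xstar⟫) :
    (ν / (2 * n)) * ‖A - Xstar‖ ^ 2 - (2 * n * Lf ^ 2 / ν + Lf) * ‖b‖ ^ 2 ≤
      ∑ i, ⟪gradient (f i) (x i) - gradient (f i) xstar, x i - xstar⟫ := by
  have hn' : (0 : ℝ) < n := by exact_mod_cast hn
  have hε : 0 < ν / (2 * n) := by positivity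
  have hbound := sum_inner_sub_sub_ge_of_norm_sub_le hlip hε x a xstar
  have hAX : ‖A - Xstar‖ ^ 2 = n * ‖a - xstar‖ ^ 2 := by
    rw [hA, hXstar, PiLp.norm_sq_toLp_const_sub, Fintype.card_fin]
  have hB : ‖b‖ ^ 2 = ∑ i, ‖x i - a‖ ^ 2 := by
    rw [hb, hA, PiLp.norm_sq_sub_toLp_const]
  have hcoef : Lf ^ 2 / (ν / (2 * n)) = 2 * n * Lf ^ 2 / ν := by
    field_simp
  have hhalf : ν / (2 * n) * (n * ‖a - xstar‖ ^ 2) = ν / 2 * ‖a - xstar‖ ^ 2 := by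
    field_simp
  rw [Fintype.card_fin, hcoef, ← hB, hhalf] at hbound
  rw [hAX, hhalf]
  linarith

/-- Inner decomposition estimate from the proof of Lemma 2: with `𝒂 = 𝟏ₙ ⊗ a` the consensus
component of `𝒙` (`a` the average of the `xᵢ`), `𝒃 = 𝒙 − 𝒂`, `𝒙* = 𝟏ₙ ⊗ x*`, each `∇fᵢ`
`L_f`-Lipschitz, and the restricted secant inequality for `f = Σfᵢ` at `a` with projection
value `x*`, one has
`(∇𝒇̃(𝒙) − ∇𝒇̃(𝒙*))ᵀ(𝒙 − 𝒙*) ≥ (ν/(2n))‖𝒂 − 𝒙*‖² − (2nL_f²/ν + L_f)‖𝒃‖²`. -/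
theorem stmt9 {n p : ℕ} (hn : 0 < n)
    (f : Fin n → (EuclideanSpace ℝ (Fin p) → ℝ))
    (hdiff : ∀ i, Differentiable ℝ (f i))
    (Lf ν : ℝ) (hLf : 0 < Lf) (hν : 0 < ν)
    (hlip : ∀ i, ∀ u v : EuclideanSpace ℝ (Fin p),
      ‖gradient (f i) u - gradient (f i) v‖ ≤ Lf * ‖u - v‖)
    (x : PiLp 2 (fun _ : Fin n => EuclideanSpace ℝ (Fin p)))
    (a xstar : EuclideanSpace ℝ (Fin p))
    (ha : a = (n : ℝ)⁻¹ • ∑ i, x i)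
    (A Xstar b : PiLp 2 (fun _ : Fin n => EuclideanSpace ℝ (Fin p)))
    (hA : A = WithLp.toLp 2 (fun _ => a)) (hXstar : Xstar = WithLp.toLp 2 (fun _ => xstar))
    (hb : b = x - A)
    (hRSIa : ν * ‖a - xstar‖ ^ 2 ≤
      ∑ i, ⟪gradient (f i) a - gradient (f i) xstar, a - xstar⟫) :
    (ν / (2 * n)) * ‖A - Xstar‖ ^ 2 - (2 * n * Lf ^ 2 / ν + Lf) * ‖b‖ ^ 2 ≤
      ∑ i, ⟪gradient (f i) (x i) - gradient (f i) xstar, x i - xstar⟫ :=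
  stmt9_general hn f Lf ν hν hlip x a xstar A Xstar b hA hXstar hb hRSIa
end

section
/- Along the trajectories of the continuous-time distributed primal-dual dynamics ẋ = −α𝑳𝒙 − β(𝒗 − 𝒗⁰) − (∇𝒇̃(𝒙) − ∇𝒇̃(𝒙⁰)), 𝒗̇ = β𝑳𝒙, where 𝒙⁰ = P_{𝑿*}(𝒙) ∈ ℍ and β𝒗⁰ = −∇𝒇̃(𝒙⁰), the function V₁(𝒙,𝒗) = ½‖𝒙 − 𝒙⁰‖² + ½‖𝒗 − 𝒗⁰‖²_{RΛ₁⁻¹Rᵀ ⊗ I_p} satisfies V̇₁ ≤ −ν₁‖𝒙 − 𝒙⁰‖², provided the augmented RSI inequality (∇𝒇̃(𝒙) − ∇𝒇̃(𝒙⁰))ᵀ(𝒙 − 𝒙⁰) + α𝒙ᵀ𝑳𝒙 ≥ ν₁‖𝒙 − 𝒙⁰‖² holds and (Kₙ ⊗ I_p)(𝒗 − 𝒗⁰) = 𝒗 − 𝒗⁰. -/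
/-!
The derivative of `V₁` splits into a primal part `⟪x - x⁰, ẋ⟫` and a dual part
`⟪v - v⁰, (M ⊗ I) v̇⟫`. Since `M L = Kₙ` and `Kₙ` fixes `v - v⁰`, the dual part is
`β ⟪x, v - v⁰⟫`; as the consensus vector `x⁰` is orthogonal both to the range of `L ⊗ I` and
to `v - v⁰ ∈ range (Kₙ ⊗ I)`, this cancels the coupling term `-β ⟪x - x⁰, v - v⁰⟫` of the
primal part. What is left is `-(⟪∇f̃(x) - ∇f̃(x⁰), x - x⁰⟫ + α ⟪x, L x⟫)`, which the augmented
RSI bounds by `-ν₁ ‖x - x⁰‖²`.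
-/

open scoped RealInnerProductSpace

/-- `A ⊗ I_p` acting blockwise on `ℝ^{np}`. -/
noncomputable def blockOp11 {n p : ℕ} (A : Matrix (Fin n) (Fin n) ℝ)
    (z : PiLp 2 (fun _ : Fin n => EuclideanSpace ℝ (Fin p))) :
    PiLp 2 (fun _ : Fin n => EuclideanSpace ℝ (Fin p)) :=
  WithLp.toLp 2 (fun i => ∑ j, A i j • z j)

open scoped Matrix

section BlockOp

variable {n p : ℕ}

theorem inner_blockOp11_left (A : Matrix (Fin n) (Fin n) ℝ)
    (z w : PiLp 2 (fun _ : Fin n => EuclideanSpace ℝ (Fin p))) :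
    ⟪blockOp11 A z, w⟫ = ⟪z, blockOp11 Aᵀ w⟫ := by
  simp only [blockOp11, PiLp.inner_apply]
  calc (∑ i, ⟪(∑ j, A i j • z j : EuclideanSpace ℝ (Fin p)), w i⟫)
      = ∑ i, ∑ j, A i j * ⟪z j, w i⟫ := by
        simp [sum_inner, real_inner_smul_left]
    _ = ∑ j, ∑ i, A i j * ⟪z j, w i⟫ := Finset.sum_comm
    _ = ∑ j, ⟪z j, (∑ i, Aᵀ j i • w i : EuclideanSpace ℝ (Fin p))⟫ := by
        simp [inner_sum, real_inner_smul_right, Matrix.transpose_apply]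

theorem Matrix.IsSymm.inner_blockOp11 {A : Matrix (Fin n) (Fin n) ℝ} (hA : A.IsSymm)
    (z w : PiLp 2 (fun _ : Fin n => EuclideanSpace ℝ (Fin p))) :
    ⟪blockOp11 A z, w⟫ = ⟪z, blockOp11 A w⟫ := by
  rw [inner_blockOp11_left, hA.eq]

theorem inner_blockOp11_eq_zero_of_isSymm {A : Matrix (Fin n) (Fin n) ℝ} (hA : A.IsSymm)
    {z : PiLp 2 (fun _ : Fin n => EuclideanSpace ℝ (Fin p))} (hz : blockOp11 A z = 0)
    (w : PiLp 2 (fun _ : Fin n => EuclideanSpace ℝ (Fin p))) :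
    ⟪z, blockOp11 A w⟫ = 0 := by
  rw [← hA.inner_blockOp11, hz, inner_zero_left]

theorem blockOp11_mul (A B : Matrix (Fin n) (Fin n) ℝ)
    (z : PiLp 2 (fun _ : Fin n => EuclideanSpace ℝ (Fin p))) :
    blockOp11 (A * B) z = blockOp11 A (blockOp11 B z) := by
  refine PiLp.ext fun i => ?_
  show ∑ j, (A * B) i j • z j = ∑ k, A i k • ∑ j, B k j • z j
  simp only [Matrix.mul_apply, Finset.sum_smul, Finset.smul_sum, smul_smul]
  exact Finset.sum_comm

theorem blockOp11_smul (A : Matrix (Fin n) (Fin n) ℝ) (c : ℝ)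
    (z : PiLp 2 (fun _ : Fin n => EuclideanSpace ℝ (Fin p))) :
    blockOp11 A (c • z) = c • blockOp11 A z := by
  refine PiLp.ext fun i => ?_
  show ∑ j, A i j • (c • z j) = c • ∑ j, A i j • z j
  rw [Finset.smul_sum]
  exact Finset.sum_congr rfl fun j _ => (smul_comm _ _ _).symm

theorem inner_blockOp11_mul_of_mul_eq {L M K : Matrix (Fin n) (Fin n) ℝ} (hK : K.IsSymm)
    (hML : M * L = K) {w : PiLp 2 (fun _ : Fin n => EuclideanSpace ℝ (Fin p))}
    (hKw : blockOp11 K w = w) (x : PiLp 2 (fun _ : Fin n => EuclideanSpace ℝ (Fin p))) :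
    ⟪w, blockOp11 M (blockOp11 L x)⟫ = ⟪x, w⟫ := by
  rw [← blockOp11_mul, hML, real_inner_comm, hK.inner_blockOp11, hKw]

end BlockOp

theorem Matrix.isSymm_one_sub_smul_of_const {ι : Type*} [DecidableEq ι] (c : ℝ) :
    ((1 : Matrix ι ι ℝ) - c • Matrix.of (fun _ _ => (1 : ℝ))).IsSymm :=
  Matrix.isSymm_one.sub ((Matrix.IsSymm.ext fun _ _ => rfl).smul c)

theorem inner_primal_drift_add_dual_drift {E : Type*} [NormedAddCommGroup E]
    [InnerProductSpace ℝ E] (α β : ℝ) {x x0 y w g : E} (hy : ⟪x0, y⟫ = 0) (hw : ⟪x0, w⟫ = 0) :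
    ⟪x - x0, -(α • y) - β • w - g⟫ + β * ⟪x, w⟫ = -(⟪g, x - x0⟫ + α * ⟪x, y⟫) := by
  simp only [inner_sub_right, inner_sub_left, inner_neg_right, real_inner_smul_right,
    hy, hw, real_inner_comm g]
  ring

theorem stmt11_general {n p : ℕ}
    (α β ν₁ : ℝ)
    (L M K : Matrix (Fin n) (Fin n) ℝ)
    (hLsymm : L.IsSymm)
    (hK : K = 1 - (n : ℝ)⁻¹ • Matrix.of (fun _ _ => (1 : ℝ)))
    (hML : M * L = K)
    (x v x0 v0 : PiLp 2 (fun _ : Fin n => EuclideanSpace ℝ (Fin p)))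
    (hLx0 : blockOp11 L x0 = 0) (hKx0 : blockOp11 K x0 = 0)
    (hKv : blockOp11 K (v - v0) = v - v0)
    (G : PiLp 2 (fun _ : Fin n => EuclideanSpace ℝ (Fin p)) →
      PiLp 2 (fun _ : Fin n => EuclideanSpace ℝ (Fin p)))
    (hRSI : ν₁ * ‖x - x0‖ ^ 2 ≤ ⟪G x - G x0, x - x0⟫ + α * ⟪x, blockOp11 L x⟫) :
    ⟪x - x0, -(α • blockOp11 L x) - β • (v - v0) - (G x - G x0)⟫
        + ⟪v - v0, blockOp11 M (β • blockOp11 L x)⟫ ≤ -(ν₁ * ‖x - x0‖ ^ 2) := by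
  have hKsymm : K.IsSymm := hK ▸ Matrix.isSymm_one_sub_smul_of_const _
  have hx0L : ⟪x0, blockOp11 L x⟫ = 0 := inner_blockOp11_eq_zero_of_isSymm hLsymm hLx0 x
  have hx0v : ⟪x0, v - v0⟫ = 0 := hKv ▸ inner_blockOp11_eq_zero_of_isSymm hKsymm hKx0 _
  rw [blockOp11_smul, real_inner_smul_right, inner_blockOp11_mul_of_mul_eq hKsymm hML hKv,
    inner_primal_drift_add_dual_drift α β hx0L hx0v]
  linarith

/-- Dissipation inequality for `V₁(𝒙,𝒗) = ½‖𝒙 − 𝒙⁰‖² + ½‖𝒗 − 𝒗⁰‖²_{RΛ₁⁻¹Rᵀ⊗I}` along the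
primal-dual dynamics `ẋ = −α𝑳𝒙 − β(𝒗 − 𝒗⁰) − (∇𝒇̃(𝒙) − ∇𝒇̃(𝒙⁰))`, `𝒗̇ = β𝑳𝒙`:
`V̇₁ ≤ −ν₁‖𝒙 − 𝒙⁰‖²` provided the augmented RSI holds and `(Kₙ⊗I)(𝒗 − 𝒗⁰) = 𝒗 − 𝒗⁰`. -/
theorem stmt11 {n p : ℕ} (hn : 0 < n)
    (f : Fin n → (EuclideanSpace ℝ (Fin p) → ℝ)) (hdiff : ∀ i, Differentiable ℝ (f i))
    (α β ν₁ : ℝ) (hα : 0 < α) (hβ : 0 < β) (hν₁ : 0 < ν₁)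
    (L M K : Matrix (Fin n) (Fin n) ℝ)
    (hLsymm : L.IsSymm) (hMsymm : M.IsSymm)
    (hK : K = 1 - (n : ℝ)⁻¹ • Matrix.of (fun _ _ => (1 : ℝ)))
    (hML : M * L = K)
    (x v x0 v0 : PiLp 2 (fun _ : Fin n => EuclideanSpace ℝ (Fin p)))
    (hx0cons : ∃ y : EuclideanSpace ℝ (Fin p), x0 = WithLp.toLp 2 (fun _ => y))
    (hLx0 : blockOp11 L x0 = 0) (hKx0 : blockOp11 K x0 = 0)
    (hKv : blockOp11 K (v - v0) = v - v0)
    (G : PiLp 2 (fun _ : Fin n => EuclideanSpace ℝ (Fin p)) →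
      PiLp 2 (fun _ : Fin n => EuclideanSpace ℝ (Fin p)))
    (hG : G = fun z : PiLp 2 (fun _ : Fin n => EuclideanSpace ℝ (Fin p)) =>
      WithLp.toLp 2 (fun i => gradient (f i) (z i)))
    (hRSI : ν₁ * ‖x - x0‖ ^ 2 ≤ ⟪G x - G x0, x - x0⟫ + α * ⟪x, blockOp11 L x⟫) :
    ⟪x - x0, -(α • blockOp11 L x) - β • (v - v0) - (G x - G x0)⟫
        + ⟪v - v0, blockOp11 M (β • blockOp11 L x)⟫ ≤ -(ν₁ * ‖x - x0‖ ^ 2) :=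
  stmt11_general α β ν₁ L M K hLsymm hK hML x v x0 v0 hLx0 hKx0 hKv G hRSI
end
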